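/- arXiv:1609.01869 — 3 statements merged into one kernel-verified Lean document; each statement's English description precedes it below -/
import Mathlib

section
/- Let p > 1, s ∈ (0,1), and u ∈ Ẇ^{s,p}(ℝ^N). For R > 0, R^N ∫_{B_{4R}^c} |u(x)|^p / |x|^{N+ps} dx ≤ C(N,p,s) ∫_{B_{3R} \ B_{2R}} ( |D^s u|^p(x) + |u(x)|^p / R^{ps} ) dx. -/
open MeasureTheory Metric
open scoped ENNReal

/-- Fractional energy density `|D^s u|^p (x)`. -/
noncomputable def Dsp (N : ℕ) (s p : ℝ) (u : EuclideanSpace ℝ (Fin N) → ℝ)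
    (x : EuclideanSpace ℝ (Fin N)) : ℝ≥0∞ :=
  ∫⁻ y, ENNReal.ofReal (|u x - u y| ^ p / ‖x - y‖ ^ ((N : ℝ) + p * s))

/-- Gagliardo seminorm to the `p`-th power. -/
noncomputable def gaglP (N : ℕ) (s p : ℝ) (u : EuclideanSpace ℝ (Fin N) → ℝ) : ℝ≥0∞ :=
  ∫⁻ x, Dsp N s p u x

/-!
For `‖x‖ ≥ 4R` and `‖z‖ < 3R` one has `‖x - z‖ ≤ 2‖x‖`, so with `α = N + ps`
`|u x|^p ‖x‖^{-α} ≤ 2^{p+α} |u x - u z|^p ‖x - z‖^{-α} + 2^p ‖x‖^{-α} |u z|^p`.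
Averaging in `z` over the annulus `B_{3R} ∖ B_{2R}`, of measure `(3^N - 2^N) |B_1| R^N`, the first
term gives (by Tonelli) at most `∫_{annulus} |D^s u|^p`, the second gives
`∫_{B_{4R}^c} ‖x‖^{-α} dx · ∫_{annulus} |u|^p`. The radial integral is finite because `α > N`,
and by scaling it equals `R^{-ps}` times its value for `R = 1`.
-/

lemma abs_rpow_le_two_rpow_mul {p : ℝ} (hp : 0 ≤ p) (a b : ℝ) :
    |a| ^ p ≤ 2 ^ p * (|a - b| ^ p + |b| ^ p) := by
  have hmax : |a| ≤ 2 * max |a - b| |b| := by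
    linarith [abs_sub_abs_le_abs_sub a b, le_max_left |a - b| |b|, le_max_right |a - b| |b|]
  calc |a| ^ p ≤ (2 * max |a - b| |b|) ^ p := by gcongr
    _ = 2 ^ p * max |a - b| |b| ^ p := Real.mul_rpow zero_le_two (by positivity)
    _ ≤ 2 ^ p * (|a - b| ^ p + |b| ^ p) := by
      gcongr
      rcases max_choice |a - b| |b| with h | h <;> rw [h]
      · exact le_add_of_nonneg_right (by positivity)
      · exact le_add_of_nonneg_left (by positivity)

lemma rpow_neg_le_rpow_mul_rpow_neg {a b c α : ℝ} (hα : 0 ≤ α) (ha : 0 < a) (hb : 0 < b)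
    (hbc : b ≤ c * a) : a ^ (-α) ≤ c ^ α * b ^ (-α) := by
  have hc : 0 < c := pos_of_mul_pos_left (hb.trans_le hbc) ha.le
  calc a ^ (-α) = c ^ α * (c * a) ^ (-α) := by
        rw [Real.mul_rpow hc.le ha.le, ← mul_assoc, ← Real.rpow_add hc, add_neg_cancel,
          Real.rpow_zero, one_mul]
    _ ≤ c ^ α * b ^ (-α) :=
      mul_le_mul_of_nonneg_left (Real.rpow_le_rpow_of_nonpos hb hbc (neg_nonpos.2 hα))
        (by positivity)

lemma abs_rpow_div_norm_rpow_le {E : Type*} [SeminormedAddCommGroup E] {p α : ℝ} (hp : 0 ≤ p)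
    (hα : 0 ≤ α) {x z : E} (hzx : ‖z‖ < ‖x‖) (a b : ℝ) :
    |a| ^ p / ‖x‖ ^ α ≤
      2 ^ p * 2 ^ α * (|a - b| ^ p / ‖x - z‖ ^ α) + 2 ^ p * ‖x‖ ^ (-α) * |b| ^ p := by
  have hx : 0 < ‖x‖ := (norm_nonneg z).trans_lt hzx
  have hxz : 0 < ‖x - z‖ := by linarith [norm_sub_norm_le x z]
  have hxz_le : ‖x - z‖ ≤ 2 * ‖x‖ := by linarith [norm_sub_le x z]
  rw [div_eq_mul_inv, div_eq_mul_inv, ← Real.rpow_neg hx.le, ← Real.rpow_neg hxz.le]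
  calc |a| ^ p * ‖x‖ ^ (-α)
      ≤ 2 ^ p * (|a - b| ^ p + |b| ^ p) * ‖x‖ ^ (-α) := by
        gcongr; exact abs_rpow_le_two_rpow_mul hp a b
    _ = 2 ^ p * |a - b| ^ p * ‖x‖ ^ (-α) + 2 ^ p * ‖x‖ ^ (-α) * |b| ^ p := by ring
    _ ≤ 2 ^ p * |a - b| ^ p * (2 ^ α * ‖x - z‖ ^ (-α)) +
          2 ^ p * ‖x‖ ^ (-α) * |b| ^ p := by
        gcongr
        exact rpow_neg_le_rpow_mul_rpow_neg hα hx hxz hxz_le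
    _ = _ := by ring

lemma ofReal_abs_rpow_div_norm_rpow_le {E : Type*} [SeminormedAddCommGroup E] {p α : ℝ}
    (hp : 0 ≤ p) (hα : 0 ≤ α) {x z : E} (hzx : ‖z‖ < ‖x‖) (a b : ℝ) :
    ENNReal.ofReal (|a| ^ p / ‖x‖ ^ α) ≤
      ENNReal.ofReal (2 ^ p * 2 ^ α) * ENNReal.ofReal (|b - a| ^ p / ‖z - x‖ ^ α) +
        ENNReal.ofReal (2 ^ p) * (ENNReal.ofReal (‖x‖ ^ (-α)) * ENNReal.ofReal (|b| ^ p)) := by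
  rw [← ENNReal.ofReal_mul (by positivity), ← ENNReal.ofReal_mul (by positivity),
    ← ENNReal.ofReal_mul (by positivity), ← ENNReal.ofReal_add (by positivity) (by positivity),
    abs_sub_comm, norm_sub_rev, ← mul_assoc]
  exact ENNReal.ofReal_le_ofReal (abs_rpow_div_norm_rpow_le hp hα hzx a b)

theorem measure_mul_setLIntegral_abs_rpow_div_le {E : Type*} [NormedAddCommGroup E]
    [MeasurableSpace E] [BorelSpace E] [SecondCountableTopology E] {μ : Measure E} [SFinite μ]
    {p α : ℝ} (hp : 0 ≤ p) (hα : 0 ≤ α) {u : E → ℝ} (hu : Measurable u) {K A : Set E}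
    (hK : MeasurableSet K) (hA : MeasurableSet A) (hKA : ∀ x ∈ K, ∀ z ∈ A, ‖z‖ < ‖x‖) :
    μ A * ∫⁻ x in K, ENNReal.ofReal (|u x| ^ p / ‖x‖ ^ α) ∂μ ≤
      ENNReal.ofReal (2 ^ p * 2 ^ α) *
          ∫⁻ z in A, ∫⁻ x, ENNReal.ofReal (|u z - u x| ^ p / ‖z - x‖ ^ α) ∂μ ∂μ +
        ENNReal.ofReal (2 ^ p) * ((∫⁻ x in K, ENNReal.ofReal (‖x‖ ^ (-α)) ∂μ) *
          ∫⁻ z in A, ENNReal.ofReal (|u z| ^ p) ∂μ) := by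
  set F : E → E → ℝ≥0∞ := fun x z => ENNReal.ofReal (|u z - u x| ^ p / ‖z - x‖ ^ α)
  have hF : Measurable (Function.uncurry F) := by fun_prop
  have hsplit : ∀ x, ∫⁻ z in A, (ENNReal.ofReal (2 ^ p * 2 ^ α) * F x z +
      ENNReal.ofReal (2 ^ p) * (ENNReal.ofReal (‖x‖ ^ (-α)) * ENNReal.ofReal (|u z| ^ p)))
        ∂μ =
      ENNReal.ofReal (2 ^ p * 2 ^ α) * ∫⁻ z in A, F x z ∂μ + ENNReal.ofReal (2 ^ p) *
        ∫⁻ z in A, ENNReal.ofReal (‖x‖ ^ (-α)) * ENNReal.ofReal (|u z| ^ p) ∂μ := by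
    intro x
    rw [lintegral_add_left (by fun_prop), lintegral_const_mul' _ _ ENNReal.ofReal_ne_top,
      lintegral_const_mul' _ _ ENNReal.ofReal_ne_top]
  calc μ A * ∫⁻ x in K, ENNReal.ofReal (|u x| ^ p / ‖x‖ ^ α) ∂μ
      = ∫⁻ x in K, ∫⁻ _ in A, ENNReal.ofReal (|u x| ^ p / ‖x‖ ^ α) ∂μ ∂μ := by
        simp_rw [setLIntegral_const]
        rw [lintegral_mul_const _ (by fun_prop), mul_comm]
    _ ≤ ∫⁻ x in K, ∫⁻ z in A, (ENNReal.ofReal (2 ^ p * 2 ^ α) * F x z +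
          ENNReal.ofReal (2 ^ p) * (ENNReal.ofReal (‖x‖ ^ (-α)) * ENNReal.ofReal (|u z| ^ p)))
            ∂μ ∂μ :=
        setLIntegral_mono' hK fun x hx => setLIntegral_mono' hA fun z hz =>
          ofReal_abs_rpow_div_norm_rpow_le hp hα (hKA x hx z hz) _ _
    _ = ENNReal.ofReal (2 ^ p * 2 ^ α) * ∫⁻ x in K, ∫⁻ z in A, F x z ∂μ ∂μ +
          ENNReal.ofReal (2 ^ p) * ((∫⁻ x in K, ENNReal.ofReal (‖x‖ ^ (-α)) ∂μ) *
            ∫⁻ z in A, ENNReal.ofReal (|u z| ^ p) ∂μ) := by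
        simp_rw [hsplit]
        have hFA : Measurable fun x => ∫⁻ z in A, F x z ∂μ := hF.lintegral_prod_right'
        rw [lintegral_add_left (hFA.const_mul _),
          lintegral_const_mul' _ _ ENNReal.ofReal_ne_top,
          lintegral_const_mul' _ _ ENNReal.ofReal_ne_top,
          lintegral_lintegral_mul (by fun_prop) (by fun_prop)]
    _ ≤ _ := by
        refine add_le_add_left (mul_le_mul_right ?_ _) _
        rw [lintegral_lintegral_swap hF.aemeasurable]
        exact lintegral_mono fun z => setLIntegral_le_lintegral _ _

section Haar

variable {E : Type*} [NormedAddCommGroup E] [NormedSpace ℝ E] [FiniteDimensional ℝ E]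
  [MeasurableSpace E] [BorelSpace E] (μ : Measure E) [μ.IsAddHaarMeasure]

theorem setLIntegral_compl_ball_norm_rpow_neg_lt_top {α r : ℝ}
    (hα : (Module.finrank ℝ E : ℝ) < α) (hr : 0 < r) :
    ∫⁻ x in (ball (0 : E) r)ᶜ, ENNReal.ofReal (‖x‖ ^ (-α)) ∂μ < ∞ := by
  have hα0 : 0 ≤ α := (Nat.cast_nonneg _).trans hα.le
  calc ∫⁻ x in (ball (0 : E) r)ᶜ, ENNReal.ofReal (‖x‖ ^ (-α)) ∂μ
      ≤ ∫⁻ x in (ball (0 : E) r)ᶜ,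
          ENNReal.ofReal ((r⁻¹ + 1) ^ α) * ENNReal.ofReal ((1 + ‖x‖) ^ (-α)) ∂μ := by
        refine setLIntegral_mono (by fun_prop) fun x hx => ?_
        have hrx : r ≤ ‖x‖ := by simpa using hx
        rw [← ENNReal.ofReal_mul (by positivity)]
        refine ENNReal.ofReal_le_ofReal (rpow_neg_le_rpow_mul_rpow_neg hα0 (hr.trans_le hrx)
          (by positivity) ?_)
        have : 1 ≤ r⁻¹ * ‖x‖ := (le_inv_mul_iff₀ hr).2 (by simpa using hrx)
        linarith
    _ ≤ ENNReal.ofReal ((r⁻¹ + 1) ^ α) *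
          ∫⁻ x, ENNReal.ofReal ((1 + ‖x‖) ^ (-α)) ∂μ := by
        rw [← lintegral_const_mul' _ _ ENNReal.ofReal_ne_top]
        exact setLIntegral_le_lintegral _ _
    _ < ∞ := ENNReal.mul_lt_top ENNReal.ofReal_lt_top (finite_integral_one_add_norm hα)

theorem setLIntegral_compl_ball_mul_norm_rpow_neg (α : ℝ) {R : ℝ} (hR : 0 < R) (r : ℝ) :
    ∫⁻ x in (ball (0 : E) (r * R))ᶜ, ENNReal.ofReal (‖x‖ ^ (-α)) ∂μ =
      ENNReal.ofReal (R ^ ((Module.finrank ℝ E : ℝ) - α)) *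
        ∫⁻ x in (ball (0 : E) r)ᶜ, ENNReal.ofReal (‖x‖ ^ (-α)) ∂μ := by
  have hmap := Measure.map_addHaar_smul μ (inv_ne_zero hR.ne')
  have key := setLIntegral_map (μ := μ) (measurableSet_ball (x := (0 : E)) (ε := r)).compl
    (f := fun x => ENNReal.ofReal (‖x‖ ^ (-α))) (by fun_prop) (measurable_const_smul R⁻¹)
  have hpre : (fun x : E => R⁻¹ • x) ⁻¹' (ball 0 r)ᶜ = (ball 0 (r * R))ᶜ := by
    ext x
    simp [norm_smul, abs_of_pos hR, inv_mul_lt_iff₀ hR, mul_comm]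
  have hnorm : ∀ x : E, ENNReal.ofReal (‖R⁻¹ • x‖ ^ (-α)) =
      ENNReal.ofReal (R ^ α) * ENNReal.ofReal (‖x‖ ^ (-α)) := fun x => by
    rw [← ENNReal.ofReal_mul (by positivity), norm_smul, Real.norm_of_nonneg (inv_pos.2 hR).le,
      Real.mul_rpow (inv_pos.2 hR).le (norm_nonneg x), Real.inv_rpow hR.le, Real.rpow_neg hR.le,
      inv_inv]
  rw [hmap, Measure.restrict_smul, lintegral_smul_measure, hpre, inv_pow, inv_inv,
    abs_of_pos (by positivity), smul_eq_mul] at key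
  simp_rw [hnorm] at key
  rw [lintegral_const_mul' _ _ ENNReal.ofReal_ne_top] at key
  calc ∫⁻ x in (ball (0 : E) (r * R))ᶜ, ENNReal.ofReal (‖x‖ ^ (-α)) ∂μ
      = ENNReal.ofReal (R ^ (-α)) * (ENNReal.ofReal (R ^ α) *
          ∫⁻ x in (ball (0 : E) (r * R))ᶜ, ENNReal.ofReal (‖x‖ ^ (-α)) ∂μ) := by
        rw [← mul_assoc, ← ENNReal.ofReal_mul (by positivity), ← Real.rpow_add hR,
          neg_add_cancel, Real.rpow_zero, ENNReal.ofReal_one, one_mul]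
    _ = _ := by
        rw [← key, ← mul_assoc, ← ENNReal.ofReal_mul (by positivity), ← Real.rpow_natCast,
          ← Real.rpow_add hR, neg_add_eq_sub]

theorem addHaar_ball_diff_ball [Nontrivial E] (x : E) {a b : ℝ} (ha : 0 ≤ a) (hab : a ≤ b) :
    μ (ball x b \ ball x a) =
      ENNReal.ofReal (b ^ Module.finrank ℝ E - a ^ Module.finrank ℝ E) * μ (ball 0 1) := by
  rw [measure_sdiff (ball_subset_ball hab) measurableSet_ball.nullMeasurableSet
      measure_ball_lt_top.ne, Measure.addHaar_ball μ x (ha.trans hab),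
    Measure.addHaar_ball μ x ha, ← ENNReal.sub_mul fun _ _ => measure_ball_lt_top.ne,
    ← ENNReal.ofReal_sub _ (by positivity)]

theorem measure_annulus_mul_setLIntegral_compl_ball_le {p α : ℝ} (hp : 0 ≤ p) (hα : 0 ≤ α)
    {u : E → ℝ} (hu : Measurable u) {R : ℝ} (hR : 0 < R) :
    μ (ball 0 (3 * R) \ ball 0 (2 * R)) *
        ∫⁻ x in (ball (0 : E) (4 * R))ᶜ, ENNReal.ofReal (|u x| ^ p / ‖x‖ ^ α) ∂μ ≤
      (ENNReal.ofReal (2 ^ p * 2 ^ α) + ENNReal.ofReal (2 ^ p) *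
          ∫⁻ x in (ball (0 : E) 4)ᶜ, ENNReal.ofReal (‖x‖ ^ (-α)) ∂μ) *
        ∫⁻ x in ball (0 : E) (3 * R) \ ball 0 (2 * R),
          (∫⁻ y, ENNReal.ofReal (|u x - u y| ^ p / ‖x - y‖ ^ α) ∂μ +
            ENNReal.ofReal (|u x| ^ p / R ^ (α - Module.finrank ℝ E))) ∂μ := by
  set d := Module.finrank ℝ E
  set A := ball (0 : E) (3 * R) \ ball 0 (2 * R)
  set S := ∫⁻ x in (ball (0 : E) 4)ᶜ, ENNReal.ofReal (‖x‖ ^ (-α)) ∂μ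
  set W := ∫⁻ z in A, ENNReal.ofReal (|u z| ^ p) ∂μ
  set J := ∫⁻ x in A, (∫⁻ y, ENNReal.ofReal (|u x - u y| ^ p / ‖x - y‖ ^ α) ∂μ +
    ENNReal.ofReal (|u x| ^ p / R ^ (α - d))) ∂μ
  have havg := measure_mul_setLIntegral_abs_rpow_div_le (μ := μ) (K := (ball 0 (4 * R))ᶜ)
    (A := A) hp hα hu measurableSet_ball.compl (measurableSet_ball.diff measurableSet_ball)
    fun x hx z hz => by
      have hx' : 4 * R ≤ ‖x‖ := by simpa using hx
      have hz' : ‖z‖ < 3 * R := by simpa using hz.1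
      linarith
  rw [setLIntegral_compl_ball_mul_norm_rpow_neg μ α hR 4] at havg
  have hDsp :
      ∫⁻ z in A, ∫⁻ x, ENNReal.ofReal (|u z - u x| ^ p / ‖z - x‖ ^ α) ∂μ ∂μ ≤ J :=
    lintegral_mono fun z => le_self_add
  have hW : ENNReal.ofReal (R ^ ((d : ℝ) - α)) * W ≤ J := by
    rw [← lintegral_const_mul' _ _ ENNReal.ofReal_ne_top]
    refine lintegral_mono fun z => le_add_left (le_of_eq ?_)
    rw [← ENNReal.ofReal_mul (by positivity), div_eq_mul_inv, ← Real.rpow_neg hR.le, neg_sub,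
      mul_comm]
  calc _ ≤ ENNReal.ofReal (2 ^ p * 2 ^ α) * J +
          ENNReal.ofReal (2 ^ p) * S * (ENNReal.ofReal (R ^ ((d : ℝ) - α)) * W) := by
        refine havg.trans (le_of_le_of_eq (add_le_add_left (mul_le_mul_right hDsp _) _) ?_)
        ring
    _ ≤ ENNReal.ofReal (2 ^ p * 2 ^ α) * J + ENNReal.ofReal (2 ^ p) * S * J := by gcongr
    _ = _ := (add_mul _ _ _).symm

theorem exists_setLIntegral_compl_ball_le [Nontrivial E] {p α : ℝ} (hp : 0 ≤ p)
    (hα : (Module.finrank ℝ E : ℝ) < α) :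
    ∃ C > 0, ∀ (u : E → ℝ) (R : ℝ), 0 < R → Measurable u →
      ENNReal.ofReal (R ^ (Module.finrank ℝ E : ℝ)) *
          ∫⁻ x in (ball (0 : E) (4 * R))ᶜ, ENNReal.ofReal (|u x| ^ p / ‖x‖ ^ α) ∂μ ≤
        ENNReal.ofReal C * ∫⁻ x in ball (0 : E) (3 * R) \ ball 0 (2 * R),
          (∫⁻ y, ENNReal.ofReal (|u x - u y| ^ p / ‖x - y‖ ^ α) ∂μ +
            ENNReal.ofReal (|u x| ^ p / R ^ (α - Module.finrank ℝ E))) ∂μ := by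
  set d := Module.finrank ℝ E
  have hα0 : 0 ≤ α := (Nat.cast_nonneg d).trans hα.le
  set D := ENNReal.ofReal (2 ^ p * 2 ^ α) +
    ENNReal.ofReal (2 ^ p) * ∫⁻ x in (ball (0 : E) 4)ᶜ, ENNReal.ofReal (‖x‖ ^ (-α)) ∂μ
  have hD0 : D ≠ 0 := by positivity
  have hD : D ≠ ∞ := ENNReal.add_ne_top.2 ⟨ENNReal.ofReal_ne_top, ENNReal.mul_ne_top
    ENNReal.ofReal_ne_top (setLIntegral_compl_ball_norm_rpow_neg_lt_top μ hα four_pos).ne⟩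
  set k := ENNReal.ofReal (3 ^ d - 2 ^ d) * μ (ball 0 1)
  have h23 : (2 : ℝ) ^ d < 3 ^ d :=
    pow_lt_pow_left₀ (by norm_num) (by norm_num) Module.finrank_pos.ne'
  have hk0 : k ≠ 0 := mul_ne_zero (by simpa using h23) (measure_ball_pos μ 0 one_pos).ne'
  have hk : k ≠ ∞ := ENNReal.mul_ne_top ENNReal.ofReal_ne_top measure_ball_lt_top.ne
  have hDk : D / k ≠ ∞ := ENNReal.div_ne_top hD hk0
  refine ⟨(D / k).toReal, ENNReal.toReal_pos (ENNReal.div_pos hD0 hk).ne' hDk,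
    fun u R hR hu => ?_⟩
  have hvol : μ (ball 0 (3 * R) \ ball 0 (2 * R)) = k * ENNReal.ofReal (R ^ (d : ℝ)) := by
    rw [addHaar_ball_diff_ball μ 0 (by positivity) (by linarith), mul_pow, mul_pow, ← sub_mul,
      ENNReal.ofReal_mul (sub_nonneg.2 h23.le), Real.rpow_natCast]
    ring
  have key := measure_annulus_mul_setLIntegral_compl_ball_le μ hp hα0 hu hR
  rw [hvol, mul_assoc] at key
  rw [ENNReal.ofReal_toReal hDk, ← ENNReal.mul_le_mul_iff_right hk0 hk, ← mul_assoc k (D / k),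
    ENNReal.mul_div_cancel hk0 hk]
  exact key

end Haar

theorem stmt6_general (N : ℕ) (p s : ℝ) (hp : 1 < p) (hs0 : 0 < s) :
    ∃ C > 0, ∀ (u : EuclideanSpace ℝ (Fin N) → ℝ) (R : ℝ), 0 < R →
      Measurable u → gaglP N s p u < ⊤ →
      ENNReal.ofReal (R ^ (N : ℝ)) *
          (∫⁻ x in (ball (0 : EuclideanSpace ℝ (Fin N)) (4 * R))ᶜ,
            ENNReal.ofReal (|u x| ^ p / ‖x‖ ^ ((N : ℝ) + p * s))) ≤
        ENNReal.ofReal C *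
          ∫⁻ x in ball (0 : EuclideanSpace ℝ (Fin N)) (3 * R) \ ball 0 (2 * R),
            (Dsp N s p u x + ENNReal.ofReal (|u x| ^ p / R ^ (p * s))) := by
  rcases Nat.eq_zero_or_pos N with rfl | hN
  · refine ⟨1, one_pos, fun u R hR _ _ => ?_⟩
    have : (ball (0 : EuclideanSpace ℝ (Fin 0)) (4 * R))ᶜ = ∅ := by
      simp [Set.eq_empty_iff_forall_notMem, Subsingleton.elim _ (0 : EuclideanSpace ℝ (Fin 0)),
        hR]
    simp [this]
  have : Nontrivial (EuclideanSpace ℝ (Fin N)) :=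
    Module.nontrivial_of_finrank_pos (R := ℝ) (by simpa using hN)
  have hα : (Module.finrank ℝ (EuclideanSpace ℝ (Fin N)) : ℝ) < N + p * s := by
    simpa using mul_pos (zero_lt_one.trans hp) hs0
  obtain ⟨C, hC, hbound⟩ :=
    exists_setLIntegral_compl_ball_le volume (zero_le_one.trans hp.le) hα
  refine ⟨C, hC, fun u R hR hu _ => ?_⟩
  simpa [Dsp] using hbound u R hR hu

/-- `R^N ∫_{B_{4R}^c} |u(x)|^p/|x|^{N+ps} dx ≤ C ∫_{B_{3R}∖B_{2R}} (|D^s u|^p + |u|^p/R^{ps})`. -/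
theorem stmt6 (N : ℕ) (p s : ℝ) (hp : 1 < p) (hs0 : 0 < s) (hs1 : s < 1) :
    ∃ C > 0, ∀ (u : EuclideanSpace ℝ (Fin N) → ℝ) (R : ℝ), 0 < R →
      Measurable u → gaglP N s p u < ⊤ →
      ENNReal.ofReal (R ^ (N : ℝ)) *
          (∫⁻ x in (ball (0 : EuclideanSpace ℝ (Fin N)) (4 * R))ᶜ,
            ENNReal.ofReal (|u x| ^ p / ‖x‖ ^ ((N : ℝ) + p * s))) ≤
        ENNReal.ofReal C *
          ∫⁻ x in ball (0 : EuclideanSpace ℝ (Fin N)) (3 * R) \ ball 0 (2 * R),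
            (Dsp N s p u x + ENNReal.ofReal (|u x| ^ p / R ^ (p * s))) :=
  stmt6_general N p s hp hs0
end

section
/- Let g : ℝ → ℝ be absolutely continuous and non-decreasing, p > 1, and define G(t) := ∫_0^t g'(τ)^{1/p} dτ. Then for every u ∈ Ẇ^{s,p}(ℝ^N), [G(u)]_{s,p}^p ≤ ⟨(-Δ_p)^s u, g(u)⟩, i.e. ∫∫ |G(u(x))-G(u(y))|^p/|x-y|^{N+ps} dx dy ≤ ∫∫ |u(x)-u(y)|^{p-2}(u(x)-u(y))(g(u(x))-g(u(y)))/|x-y|^{N+ps} dx dy. -/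
/-!
The inequality holds pointwise under the double integral. For `b ≤ a`,
`G a - G b = ∫_b^a g'^{1/p}`, and Jensen's inequality for the concave map `t ↦ t^{1/p}` on the
average over `[b, a]` gives
`(∫_b^a g'^{1/p})^p ≤ (a - b)^{p-1} ∫_b^a g' = (a - b)^{p-1} (g a - g b)`.
-/

open MeasureTheory intervalIntegral

theorem Real.rpow_le_one_add {x r : ℝ} (hx : 0 ≤ x) (hr0 : 0 ≤ r) (hr1 : r ≤ 1) :
    x ^ r ≤ 1 + x :=
  calc x ^ r = (1 + (x - 1)) ^ r := by ring_nf
    _ ≤ 1 + r * (x - 1) := rpow_one_add_le_one_add_mul_self (by linarith) hr0 hr1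
    _ ≤ 1 + x := by nlinarith

section Jensen

variable {α : Type*} [MeasurableSpace α] {μ : Measure α} [IsFiniteMeasure μ] {f : α → ℝ} {r : ℝ}

theorem MeasureTheory.Integrable.rpow_of_le_one (hf : Integrable f μ) (hf0 : ∀ᵐ x ∂μ, 0 ≤ f x)
    (hr0 : 0 ≤ r) (hr1 : r ≤ 1) : Integrable (fun x ↦ f x ^ r) μ := by
  refine ((integrable_const 1).add hf).mono'
    ((Real.continuous_rpow_const hr0).comp_aestronglyMeasurable hf.aestronglyMeasurable) ?_
  filter_upwards [hf0] with x hx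
  rw [Real.norm_of_nonneg (Real.rpow_nonneg hx r)]
  exact Real.rpow_le_one_add hx hr0 hr1

theorem MeasureTheory.average_rpow_le (hf : Integrable f μ) (hf0 : ∀ᵐ x ∂μ, 0 ≤ f x)
    (hr0 : 0 ≤ r) (hr1 : r ≤ 1) : ⨍ x, f x ^ r ∂μ ≤ (⨍ x, f x ∂μ) ^ r := by
  rcases eq_zero_or_neZero μ with rfl | _
  · simpa using Real.rpow_nonneg le_rfl r
  exact (Real.concaveOn_rpow hr0 hr1).le_map_average
    (Real.continuous_rpow_const hr0).continuousOn isClosed_Ici hf0 hf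
    (hf.rpow_of_le_one hf0 hr0 hr1)

end Jensen

theorem IntervalIntegrable.rpow_of_le_one {f : ℝ → ℝ} {a b r : ℝ}
    (hf : IntervalIntegrable f volume a b) (hf0 : ∀ x, 0 ≤ f x) (hr0 : 0 ≤ r) (hr1 : r ≤ 1) :
    IntervalIntegrable (fun x ↦ f x ^ r) volume a b :=
  ⟨hf.1.rpow_of_le_one (.of_forall hf0) hr0 hr1, hf.2.rpow_of_le_one (.of_forall hf0) hr0 hr1⟩

theorem intervalIntegral.integral_rpow_le {f : ℝ → ℝ} {a b r : ℝ} (hab : a ≤ b)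
    (hf : IntervalIntegrable f volume a b) (hf0 : ∀ x, 0 ≤ f x) (hr0 : 0 ≤ r) (hr1 : r ≤ 1) :
    ∫ x in a..b, f x ^ r ≤ (b - a) ^ (1 - r) * (∫ x in a..b, f x) ^ r := by
  rcases hab.eq_or_lt with rfl | hab
  · simp only [integral_same, sub_self]; positivity
  have hL : 0 < b - a := sub_pos.mpr hab
  have hjensen := average_rpow_le (μ := volume.restrict (Set.Ioc a b))
    (hf.1 : Integrable f _) (.of_forall hf0) hr0 hr1
  rw [average_eq, average_eq, measureReal_restrict_apply_univ, Real.volume_real_Ioc_of_le hab.le,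
    smul_eq_mul, smul_eq_mul] at hjensen
  rw [integral_of_le hab.le, integral_of_le hab.le]
  calc ∫ x in Set.Ioc a b, f x ^ r
      = (b - a) * ((b - a)⁻¹ * ∫ x in Set.Ioc a b, f x ^ r) := by field_simp
    _ ≤ (b - a) * ((b - a)⁻¹ * ∫ x in Set.Ioc a b, f x) ^ r := by gcongr
    _ = (b - a) ^ (1 - r) * (∫ x in Set.Ioc a b, f x) ^ r := by
      rw [Real.mul_rpow (inv_nonneg.mpr hL.le)
          (setIntegral_nonneg measurableSet_Ioc fun x _ ↦ hf0 x), Real.inv_rpow hL.le,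
        Real.rpow_sub hL, Real.rpow_one]
      ring

section FractionalChainRule

variable {p : ℝ} {g g' G : ℝ → ℝ}

theorem abs_sub_rpow_le_of_le (hp : 1 ≤ p) (hg'nonneg : ∀ t, 0 ≤ g' t)
    (hg'int : ∀ a b : ℝ, IntervalIntegrable g' volume a b)
    (hFTC : ∀ a b : ℝ, g b - g a = ∫ τ in a..b, g' τ)
    (hG : ∀ t : ℝ, G t = ∫ τ in (0:ℝ)..t, (g' τ) ^ (1 / p)) {a b : ℝ} (hba : b ≤ a) :
    |G a - G b| ^ p ≤ |a - b| ^ (p - 2) * (a - b) * (g a - g b) := by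
  have hp0 : 0 < p := by linarith
  have hr0 : 0 ≤ 1 / p := by positivity
  have hr1 : 1 / p ≤ 1 := (div_le_one hp0).mpr hp
  have hint (c d : ℝ) := (hg'int c d).rpow_of_le_one hg'nonneg hr0 hr1
  have hGab : G a - G b = ∫ τ in b..a, g' τ ^ (1 / p) := by
    rw [hG, hG, integral_interval_sub_left (hint 0 a) (hint 0 b)]
  rcases hba.eq_or_lt with rfl | hba
  · simp [Real.zero_rpow hp0.ne']
  have hL : 0 < a - b := sub_pos.mpr hba
  have hgab : 0 ≤ g a - g b := by
    rw [hFTC]; exact integral_nonneg hba.le fun τ _ ↦ hg'nonneg τ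
  calc |G a - G b| ^ p ≤ ((a - b) ^ (1 - 1 / p) * (g a - g b) ^ (1 / p)) ^ p := by
        have hGab0 : 0 ≤ G a - G b := by
          rw [hGab]; exact integral_nonneg hba.le fun τ _ ↦ Real.rpow_nonneg (hg'nonneg τ) _
        rw [abs_of_nonneg hGab0, hFTC]
        exact Real.rpow_le_rpow hGab0
          (hGab ▸ integral_rpow_le hba.le (hg'int b a) hg'nonneg hr0 hr1) hp0.le
    _ = (a - b) ^ (p - 1) * (g a - g b) := by
        rw [Real.mul_rpow (by positivity) (by positivity), ← Real.rpow_mul hL.le,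
          ← Real.rpow_mul hgab, one_sub_mul, one_div_mul_cancel hp0.ne', Real.rpow_one]
    _ = |a - b| ^ (p - 2) * (a - b) * (g a - g b) := by
        rw [abs_of_pos hL, ← Real.rpow_add_one hL.ne']
        ring_nf

theorem abs_sub_rpow_le (hp : 1 ≤ p) (hg'nonneg : ∀ t, 0 ≤ g' t)
    (hg'int : ∀ a b : ℝ, IntervalIntegrable g' volume a b)
    (hFTC : ∀ a b : ℝ, g b - g a = ∫ τ in a..b, g' τ)
    (hG : ∀ t : ℝ, G t = ∫ τ in (0:ℝ)..t, (g' τ) ^ (1 / p)) (a b : ℝ) :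
    |G a - G b| ^ p ≤ |a - b| ^ (p - 2) * (a - b) * (g a - g b) := by
  rcases le_total b a with hba | hab
  · exact abs_sub_rpow_le_of_le hp hg'nonneg hg'int hFTC hG hba
  · calc |G a - G b| ^ p = |G b - G a| ^ p := by rw [abs_sub_comm]
      _ ≤ |b - a| ^ (p - 2) * (b - a) * (g b - g a) :=
        abs_sub_rpow_le_of_le hp hg'nonneg hg'int hFTC hG hab
      _ = |a - b| ^ (p - 2) * (a - b) * (g a - g b) := by rw [abs_sub_comm]; ring

end FractionalChainRule

theorem stmt8_general (N : ℕ) (s p : ℝ) (hp : 1 < p)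
    (g g' G : ℝ → ℝ)
    (hg'nonneg : ∀ t, 0 ≤ g' t)
    (hg'int : ∀ a b : ℝ, IntervalIntegrable g' MeasureTheory.volume a b)
    (hFTC : ∀ a b : ℝ, g b - g a = ∫ τ in a..b, g' τ)
    (hG : ∀ t : ℝ, G t = ∫ τ in (0:ℝ)..t, (g' τ) ^ (1 / p))
    (u : EuclideanSpace ℝ (Fin N) → ℝ) :
    (∫⁻ x, ∫⁻ y,
        ENNReal.ofReal (|G (u x) - G (u y)| ^ p / ‖x - y‖ ^ ((N : ℝ) + p * s))) ≤
      ∫⁻ x, ∫⁻ y, ENNReal.ofReal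
        ((|u x - u y| ^ (p - 2) * (u x - u y) * (g (u x) - g (u y))) /
          ‖x - y‖ ^ ((N : ℝ) + p * s)) := by
  refine lintegral_mono fun x ↦ lintegral_mono fun y ↦ ENNReal.ofReal_le_ofReal ?_
  gcongr
  exact abs_sub_rpow_le hp.le hg'nonneg hg'int hFTC hG (u x) (u y)

/-- If `g` is absolutely continuous and non-decreasing (encoded via a nonnegative density
`g'` with `g b - g a = ∫_a^b g'`), and `G(t) = ∫_0^t g'(τ)^{1/p} dτ`, then
`[G(u)]_{s,p}^p ≤ ⟨(-Δ_p)^s u, g(u)⟩` for every `u ∈ Ẇ^{s,p}(ℝ^N)`. -/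
theorem stmt8 (N : ℕ) (s p : ℝ) (hp : 1 < p) (hs0 : 0 < s) (hs1 : s < 1)
    (g g' G : ℝ → ℝ)
    (hg'nonneg : ∀ t, 0 ≤ g' t)
    (hg'int : ∀ a b : ℝ, IntervalIntegrable g' MeasureTheory.volume a b)
    (hFTC : ∀ a b : ℝ, g b - g a = ∫ τ in a..b, g' τ)
    (hG : ∀ t : ℝ, G t = ∫ τ in (0:ℝ)..t, (g' τ) ^ (1 / p))
    (u : EuclideanSpace ℝ (Fin N) → ℝ) (hu : Measurable u)
    (hufin : (∫⁻ x, ∫⁻ y,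
        ENNReal.ofReal (|u x - u y| ^ p / ‖x - y‖ ^ ((N : ℝ) + p * s))) < ⊤) :
    (∫⁻ x, ∫⁻ y,
        ENNReal.ofReal (|G (u x) - G (u y)| ^ p / ‖x - y‖ ^ ((N : ℝ) + p * s))) ≤
      ∫⁻ x, ∫⁻ y, ENNReal.ofReal
        ((|u x - u y| ^ (p - 2) * (u x - u y) * (g (u x) - g (u y))) /
          ‖x - y‖ ^ ((N : ℝ) + p * s)) :=
  stmt8_general N s p hp g g' G hg'nonneg hg'int hFTC hG u
end

section
/- Let λ ≥ 1 and let h : [0,∞) → [0,∞) be non-increasing and integrable. Then ∫_0^∞ h(t)^λ t^{λ−1} dt ≤ ( ∫_0^∞ h(t) dt )^λ. -/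
open MeasureTheory Set
open scoped ENNReal

/-! A non-increasing `h ≥ 0` satisfies `t h(t) ≤ ∫_0^t h ≤ A := ∫_0^∞ h`, so
`h(t)^λ t^(λ-1) = (t h(t))^(λ-1) h(t) ≤ A^(λ-1) h(t)`,
and integrating gives `A^(λ-1) · A = A^λ`. -/

theorem AntitoneOn.sub_mul_le_intervalIntegral {h : ℝ → ℝ} {a b : ℝ} (hab : a ≤ b)
    (hanti : AntitoneOn h (Icc a b)) : (b - a) * h b ≤ ∫ s in a..b, h s := by
  have hint : IntervalIntegrable h volume a b :=
    AntitoneOn.intervalIntegrable (by rwa [uIcc_of_le hab])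
  calc (b - a) * h b = ∫ _ in a..b, h b := by simp
    _ ≤ ∫ s in a..b, h s :=
      intervalIntegral.integral_mono_on hab intervalIntegrable_const hint fun s hs =>
        hanti hs ⟨hab, le_rfl⟩ hs.2

theorem AntitoneOn.mul_le_setIntegral_Ioi {h : ℝ → ℝ} {t : ℝ} (ht : 0 ≤ t)
    (hnonneg : ∀ s, 0 ≤ h s) (hanti : AntitoneOn h (Ici 0)) (hint : IntegrableOn h (Ioi 0)) :
    h t * t ≤ ∫ s in Ioi 0, h s :=
  calc h t * t = (t - 0) * h t := by ring
    _ ≤ ∫ s in (0 : ℝ)..t, h s :=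
      (hanti.mono Icc_subset_Ici_self).sub_mul_le_intervalIntegral ht
    _ = ∫ s in Ioc 0 t, h s := intervalIntegral.integral_of_le ht
    _ ≤ ∫ s in Ioi 0, h s :=
      setIntegral_mono_set hint (.of_forall hnonneg) Ioc_subset_Ioi_self.eventuallyLE

theorem Real.rpow_mul_rpow_sub_one_le {x y A p : ℝ} (hx : 0 ≤ x) (hy : 0 ≤ y) (hp : 1 ≤ p)
    (hxy : x * y ≤ A) : x ^ p * y ^ (p - 1) ≤ A ^ (p - 1) * x :=
  calc x ^ p * y ^ (p - 1) = (x * y) ^ (p - 1) * x := by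
        rw [Real.mul_rpow hx hy, mul_right_comm, ← Real.rpow_add_one' hx (by linarith),
          sub_add_cancel]
    _ ≤ A ^ (p - 1) * x := by gcongr

/-- For `λ ≥ 1` and `h : [0,∞) → [0,∞)` non-increasing and integrable:
`∫_0^∞ h(t)^λ t^{λ−1} dt ≤ (∫_0^∞ h(t) dt)^λ`. -/
theorem stmt11 (lam : ℝ) (h : ℝ → ℝ) (hlam : 1 ≤ lam)
    (hnonneg : ∀ t, 0 ≤ h t) (hanti : AntitoneOn h (Ici 0))
    (hint : IntegrableOn h (Ioi 0)) :
    (∫⁻ t in Ioi (0 : ℝ), ENNReal.ofReal (h t ^ lam * t ^ (lam - 1))) ≤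
      (∫⁻ t in Ioi (0 : ℝ), ENNReal.ofReal (h t)) ^ lam := by
  set A : ℝ := ∫ t in Ioi (0 : ℝ), h t
  have hA : ∫⁻ t in Ioi (0 : ℝ), ENNReal.ofReal (h t) = ENNReal.ofReal A :=
    (ofReal_integral_eq_lintegral_ofReal hint (.of_forall hnonneg)).symm
  have hA0 : 0 ≤ A := setIntegral_nonneg measurableSet_Ioi fun t _ => hnonneg t
  have hpointwise : ∀ t ∈ Ioi (0 : ℝ), ENNReal.ofReal (h t ^ lam * t ^ (lam - 1)) ≤
      ENNReal.ofReal (A ^ (lam - 1)) * ENNReal.ofReal (h t) := by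
    intro t ht
    rw [← ENNReal.ofReal_mul (by positivity)]
    exact ENNReal.ofReal_le_ofReal <| Real.rpow_mul_rpow_sub_one_le (hnonneg t) ht.le hlam
      (hanti.mul_le_setIntegral_Ioi ht.le hnonneg hint)
  calc (∫⁻ t in Ioi (0 : ℝ), ENNReal.ofReal (h t ^ lam * t ^ (lam - 1)))
      ≤ ∫⁻ t in Ioi (0 : ℝ), ENNReal.ofReal (A ^ (lam - 1)) * ENNReal.ofReal (h t) :=
        setLIntegral_mono' measurableSet_Ioi hpointwise
    _ = ENNReal.ofReal A ^ (lam - 1) * ENNReal.ofReal A := by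
        rw [lintegral_const_mul' _ _ ENNReal.ofReal_ne_top, hA,
          ENNReal.ofReal_rpow_of_nonneg hA0 (by linarith)]
    _ = (∫⁻ t in Ioi (0 : ℝ), ENNReal.ofReal (h t)) ^ lam := by
        conv_rhs => rw [hA, ← sub_add_cancel lam 1]
        rw [ENNReal.rpow_add_of_nonneg _ _ (by linarith) zero_le_one, ENNReal.rpow_one]
end
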